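/- Let n ≥ 5, let ρ = |W_n⟩⟨W_n| be the W-state projector, and let ρ' be any n-qubit quantum state such that the set {a ∈ (Fin n → Fin 4) : ⟨P_a⟩_{ρ'}² = 1} has cardinality at least 2^(3n/4). Then ‖ρ − ρ'‖₁ ≥ 1/4. -/

import Mathlib

open Matrix Kronecker
open scoped ComplexOrder

noncomputable def pauli1 : Fin 4 → Matrix (Fin 2) (Fin 2) ℂ
  | 0 => !![1, 0; 0, 1]
  | 1 => !![0, 1; 1, 0]
  | 2 => !![0, -Complex.I; Complex.I, 0]
  | 3 => !![1, 0; 0, -1]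

noncomputable def PauliOp {n : ℕ} (a : Fin n → Fin 4) :
    Matrix (Fin n → Fin 2) (Fin n → Fin 2) ℂ :=
  Matrix.of fun z z' => ∏ i, pauli1 (a i) (z i) (z' i)

/-- The trace norm of a matrix: the trace of the positive semidefinite square root of `Aᴴ * A`. -/
noncomputable def traceNorm {m : Type*} [Fintype m] [DecidableEq m]
    (A : Matrix m m ℂ) : ℝ :=
  ((Matrix.posSemidef_conjTranspose_mul_self A).1.eigenvectorUnitary.1 *
    diagonal (((↑) : ℝ → ℂ) ∘ Real.sqrt ∘ (Matrix.posSemidef_conjTranspose_mul_self A).1.eigenvalues) *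
    (star (Matrix.posSemidef_conjTranspose_mul_self A).1.eigenvectorUnitary : Matrix m m ℂ)).trace.re

/-- A quantum state: positive semidefinite with unit trace. -/
structure IsState {m : Type*} [Fintype m] (ρ : Matrix m m ℂ) : Prop where
  posSemidef : ρ.PosSemidef
  trace_one : ρ.trace = 1

/-- Pauli expectation value `⟨P_a⟩_ρ`. -/
noncomputable def pExp {n : ℕ} (ρ : Matrix (Fin n → Fin 2) (Fin n → Fin 2) ℂ)
    (a : Fin n → Fin 4) : ℝ := ((PauliOp a * ρ).trace).re

/-- The purity `tr ρ²`. -/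
noncomputable def purity {m : Type*} [Fintype m] (ρ : Matrix m m ℂ) : ℝ :=
  ((ρ * ρ).trace).re

/-- The Pauli distribution `p_ρ`. -/
noncomputable def pDist {n : ℕ} (ρ : Matrix (Fin n → Fin 2) (Fin n → Fin 2) ℂ)
    (a : Fin n → Fin 4) : ℝ := (pExp ρ a) ^ 2 / (2 ^ n * purity ρ)

/-- The cumulative distribution function `F_ρ`. -/
noncomputable def cdf {n : ℕ} (ρ : Matrix (Fin n → Fin 2) (Fin n → Fin 2) ℂ)
    (ε : ℝ) : ℝ := ∑ a : Fin n → Fin 4, if (pExp ρ a) ^ 2 ≤ ε then pDist ρ a else 0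

/-- The maximally entangled state `|Φ₀⟩`. -/
noncomputable def Phi0 (n : ℕ) : (Fin n → Fin 2) × (Fin n → Fin 2) → ℂ :=
  fun p => if p.1 = p.2 then (↑(Real.sqrt (2 ^ n)))⁻¹ else 0

/-- The Bell state `|Φ_a⟩ = (1 ⊗ P_a)|Φ₀⟩`. -/
noncomputable def BellVec {n : ℕ} (a : Fin n → Fin 4) :
    (Fin n → Fin 2) × (Fin n → Fin 2) → ℂ :=
  ((1 : Matrix (Fin n → Fin 2) (Fin n → Fin 2) ℂ) ⊗ₖ PauliOp a).mulVec (Phi0 n)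

/-- The Bell distribution `q_ρ(a) = ⟨Φ_a| ρ ⊗ ρ |Φ_a⟩`. -/
noncomputable def qDist {n : ℕ} (ρ : Matrix (Fin n → Fin 2) (Fin n → Fin 2) ℂ)
    (a : Fin n → Fin 4) : ℝ :=
  (star (BellVec a) ⬝ᵥ ((ρ ⊗ₖ ρ).mulVec (BellVec a))).re

/-- The W state. -/
noncomputable def Wstate (n : ℕ) : (Fin n → Fin 2) → ℂ :=
  fun z => if (∑ i, (z i : ℕ)) = 1 then (↑(Real.sqrt n))⁻¹ else 0

/-- The W state projector `|W_n⟩⟨W_n|`. -/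
noncomputable def Wproj (n : ℕ) : Matrix (Fin n → Fin 2) (Fin n → Fin 2) ℂ :=
  Matrix.vecMulVec (Wstate n) (star (Wstate n))


/-!
For a Pauli string `a`, `⟨P_a⟩_W = (1/n) ∑_{j,k} ⟨e_j|P_a|e_k⟩` over the weight-one basis
vectors. If `a` contains an `X` or a `Y`, at most two of these entries are nonzero, so
`|⟨P_a⟩_W| ≤ 2/n`; otherwise `⟨P_a⟩_W = 1 - 2t/n`, where `t` is the number of `Z`s. Hence
`|⟨P_a⟩_W| > 3/4` only for `I/Z` strings with `t ≤ n/8` or `t ≥ 7n/8`, and a Chernoff bound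
(weight `7^(-t)`) shows that there are fewer than `2^(3n/4)` of them once `n ≥ 5`. So some `a`
has `⟨P_a⟩_ρ' = ±1` and `|⟨P_a⟩_W| ≤ 3/4`, and since `P_a` is unitary,
`|tr (P_a D)| ≤ ‖D‖₁` for the Hermitian `D = |W⟩⟨W| - ρ'` gives `‖D‖₁ ≥ 1/4`.
-/
open Finset

section TraceNorm

variable {m : Type*} [Fintype m] [DecidableEq m]

theorem traceNorm_eq_sum_abs_eigenvalues {D : Matrix m m ℂ} (hD : D.IsHermitian) :
    traceNorm D = ∑ i, |hD.eigenvalues i| := by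
  have hsa : IsSelfAdjoint D := hD
  have h_sqrt : traceNorm D = (cfc Real.sqrt (Dᴴ * D)).trace.re := by
    rw [(posSemidef_conjTranspose_mul_self D).1.cfc_eq, IsHermitian.cfc,
      Unitary.conjStarAlgAut_apply]
    rfl
  have h_sq : Dᴴ * D = cfc (fun x : ℝ => x ^ 2) D := by
    rw [cfc_pow_id D 2 hsa, hD.eq, pow_two]
  have h_abs : (Real.sqrt ∘ fun x : ℝ => x ^ 2) = abs := funext Real.sqrt_sq_eq_abs
  rw [h_sqrt, h_sq, ← cfc_comp Real.sqrt (fun x : ℝ => x ^ 2) D hsa, h_abs, hD.cfc_eq,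
    IsHermitian.cfc, Unitary.conjStarAlgAut_apply, trace_mul_cycle, Unitary.coe_star_mul_self,
    one_mul, trace_diagonal, Complex.re_sum]
  simp

theorem abs_re_trace_mul_le_traceNorm {U D : Matrix m m ℂ} (hU : U ∈ unitaryGroup m ℂ)
    (hD : D.IsHermitian) : |(U * D).trace.re| ≤ traceNorm D := by
  set V : Matrix m m ℂ := (hD.eigenvectorUnitary : Matrix m m ℂ)
  have hM : star V * U * V ∈ unitaryGroup m ℂ :=
    mul_mem (mul_mem (Unitary.star_mem hD.eigenvectorUnitary.2) hU) hD.eigenvectorUnitary.2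
  have htr : (U * D).trace = ∑ i, (star V * U * V) i i * hD.eigenvalues i := by
    conv_lhs => rw [hD.spectral_theorem, Unitary.conjStarAlgAut_apply]
    rw [← mul_assoc, ← mul_assoc, trace_mul_cycle, ← mul_assoc]
    simp [trace, mul_diagonal, V]
  rw [traceNorm_eq_sum_abs_eigenvalues hD, htr, Complex.re_sum]
  refine (abs_sum_le_sum_abs _ _).trans (sum_le_sum fun i _ => ?_)
  calc |((star V * U * V) i i * hD.eigenvalues i).re|
      ≤ ‖(star V * U * V) i i‖ * |hD.eigenvalues i| := by
        simpa using Complex.abs_re_le_norm ((star V * U * V) i i * hD.eigenvalues i)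
    _ ≤ |hD.eigenvalues i| :=
        mul_le_of_le_one_left (abs_nonneg _) (entry_norm_bound_of_unitary hM i i)

end TraceNorm

theorem Matrix.of_prod_mem_unitaryGroup {ι κ : Type*} [Fintype ι] [DecidableEq ι] [Fintype κ]
    [DecidableEq κ] {U : ι → Matrix κ κ ℂ} (hU : ∀ i, U i ∈ unitaryGroup κ ℂ) :
    Matrix.of (fun z z' : ι → κ => ∏ i, U i (z i) (z' i)) ∈ unitaryGroup (ι → κ) ℂ := by
  rw [mem_unitaryGroup_iff']
  ext z z'
  have hUi (i : ι) : (star (U i) * U i) (z i) (z' i) = if z i = z' i then 1 else 0 := by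
    rw [mem_unitaryGroup_iff'.mp (hU i), one_apply]
  simp only [mul_apply, star_apply, of_apply, star_prod, ← prod_mul_distrib] at hUi ⊢
  rw [← Fintype.prod_sum (fun i b => star (U i b (z i)) * U i b (z' i)),
    Fintype.prod_congr _ _ hUi, prod_boole, one_apply]
  simp [funext_iff]

section Pauli

variable {n : ℕ}

theorem pauli1_mem_unitaryGroup (c : Fin 4) : pauli1 c ∈ unitaryGroup (Fin 2) ℂ := by
  rw [mem_unitaryGroup_iff']
  fin_cases c <;> ext i j <;> fin_cases i <;> fin_cases j <;> simp [pauli1, mul_apply]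

theorem PauliOp_mem_unitaryGroup (a : Fin n → Fin 4) :
    PauliOp a ∈ unitaryGroup (Fin n → Fin 2) ℂ :=
  of_prod_mem_unitaryGroup fun i => pauli1_mem_unitaryGroup (a i)

theorem abs_pExp_sub_le_traceNorm {ρ σ : Matrix (Fin n → Fin 2) (Fin n → Fin 2) ℂ}
    (hρ : ρ.IsHermitian) (hσ : σ.IsHermitian) (a : Fin n → Fin 4) :
    |pExp ρ a - pExp σ a| ≤ traceNorm (ρ - σ) := by
  have h : pExp ρ a - pExp σ a = (PauliOp a * (ρ - σ)).trace.re := by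
    simp [pExp, mul_sub, trace_sub]
  exact h ▸ abs_re_trace_mul_le_traceNorm (PauliOp_mem_unitaryGroup a) (hρ.sub hσ)

theorem pauli1_apply_ne_zero {c : Fin 4} {b b' : Fin 2} (h : pauli1 c b b' ≠ 0) :
    b ≠ b' ↔ c = 1 ∨ c = 2 := by
  fin_cases c <;> fin_cases b <;> fin_cases b' <;> simp_all [pauli1]

theorem PauliOp_apply_ne_zero {a : Fin n → Fin 4} {z z' : Fin n → Fin 2}
    (h : PauliOp a z z' ≠ 0) (i : Fin n) : z i ≠ z' i ↔ a i = 1 ∨ a i = 2 :=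
  pauli1_apply_ne_zero <|
    prod_ne_zero_iff.mp (show ∏ i, pauli1 (a i) (z i) (z' i) ≠ 0 from h) i (mem_univ i)

end Pauli

section WState

variable {n : ℕ}

theorem sum_val_eq_one_iff (z : Fin n → Fin 2) :
    ∑ i, (z i : ℕ) = 1 ↔ ∃ j, z = Pi.single j 1 := by
  have hval (b : Fin 2) : (b : ℕ) = if b = 1 then 1 else 0 := by fin_cases b <;> rfl
  simp only [hval, sum_boole, Nat.cast_id, card_eq_one, Finset.ext_iff, mem_filter, mem_univ,
    true_and, mem_singleton, funext_iff]
  refine exists_congr fun j => forall_congr' fun i => ?_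
  rcases eq_or_ne i j with rfl | hij
  · simp
  · have : z i = 1 ∨ z i = 0 := by omega
    rcases this with h | h <;> simp [h, hij]

theorem Wstate_single (j : Fin n) : Wstate n (Pi.single j 1) = ((√n : ℝ) : ℂ)⁻¹ :=
  if_pos ((sum_val_eq_one_iff _).mpr ⟨j, rfl⟩)

theorem sum_mul_Wstate (f : (Fin n → Fin 2) → ℂ) :
    ∑ z, f z * Wstate n z = ((√n : ℝ) : ℂ)⁻¹ * ∑ j, f (Pi.single j 1) := by
  have hinj : Function.Injective (fun j : Fin n => (Pi.single j 1 : Fin n → Fin 2)) :=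
    fun j k h => by simpa [Pi.single_apply, eq_comm] using congrFun h j
  rw [← sum_subset (subset_univ (univ.image fun j => Pi.single j 1)), sum_image hinj.injOn,
    mul_sum]
  · simp only [Wstate_single, mul_comm]
  · intro z _ hz
    have : ¬ ∑ i, (z i : ℕ) = 1 := by
      rw [sum_val_eq_one_iff]
      rintro ⟨j, rfl⟩
      exact hz (mem_image_of_mem _ (mem_univ j))
    simp [Wstate, this]

theorem pExp_Wproj (a : Fin n → Fin 4) :
    pExp (Wproj n) a = (∑ j, ∑ k, PauliOp a (Pi.single j 1) (Pi.single k 1)).re / n := by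
  have hW : star (Wstate n) = Wstate n := by
    ext z
    simp only [Pi.star_apply, Wstate, apply_ite star, star_zero, star_inv₀, Complex.star_def,
      Complex.conj_ofReal]
  rw [pExp, Wproj, hW, mul_vecMulVec, trace_vecMulVec]
  have hc : ((√n : ℝ) : ℂ)⁻¹ * ((√n : ℝ) : ℂ)⁻¹ = ((n : ℝ)⁻¹ : ℝ) := by
    rw [← mul_inv, ← Complex.ofReal_mul, Real.mul_self_sqrt n.cast_nonneg, Complex.ofReal_inv]
  simp only [dotProduct, mulVec, sum_mul_Wstate]
  rw [← mul_sum, ← mul_assoc, hc, Complex.re_ofReal_mul, div_eq_inv_mul]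

theorem pExp_Wproj_of_forall_eq_zero_or_eq_three {a : Fin n → Fin 4}
    (ha : ∀ i, a i = 0 ∨ a i = 3) :
    pExp (Wproj n) a = (n - 2 * #{i | a i = 3}) / n := by
  have hoff : ∀ j k, k ≠ j → PauliOp a (Pi.single j 1) (Pi.single k 1) = 0 := by
    intro j k hkj
    by_contra h
    have := (PauliOp_apply_ne_zero h j).mp (by simp [hkj])
    rcases ha j with h' | h' <;> simp [h'] at this
  have hdiag : ∀ k,
      PauliOp a (Pi.single k 1) (Pi.single k 1) = 1 - 2 * if a k = 3 then 1 else 0 := by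
    intro k
    rw [PauliOp, of_apply, prod_eq_single k]
    · rcases ha k with h | h
      · simp [h, pauli1]
      · norm_num [h, pauli1]
    · intro i _ hik
      rcases ha i with h | h <;> simp [h, hik, pauli1]
    · simp
  rw [pExp_Wproj, sum_congr rfl fun j _ => sum_eq_single j (fun k _ => hoff j k) (by simp)]
  simp only [hdiag, sum_sub_distrib, ← mul_sum, sum_boole]
  simp

theorem abs_pExp_Wproj_le_of_eq_one_or_eq_two {a : Fin n → Fin 4} {i₀ : Fin n}
    (h₀ : a i₀ = 1 ∨ a i₀ = 2) :
    |pExp (Wproj n) a| ≤ 2 / n := by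
  set f : Fin n × Fin n → ℂ := fun p => PauliOp a (Pi.single p.1 1) (Pi.single p.2 1)
  set T : Finset (Fin n × Fin n) := {p | f p ≠ 0}
  set F : Finset (Fin n) := {i | a i = 1 ∨ a i = 2}
  -- `P_a` flips exactly the bits in `F`, so it can only map `e_k` to `e_j` if `F = {j, k}`.
  have hflip : ∀ p ∈ T, p.1 ≠ p.2 ∧ F = {p.1, p.2} := by
    intro ⟨j, k⟩ hp
    have key := PauliOp_apply_ne_zero (mem_filter.mp hp).2
    have hjk : j ≠ k := by
      rintro rfl
      exact (key i₀).mpr h₀ rfl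
    refine ⟨hjk, Finset.ext fun i => ?_⟩
    simp only [F, mem_filter, mem_univ, true_and, ← key, Pi.single_apply, mem_insert,
      mem_singleton]
    by_cases hij : i = j <;> by_cases hik : i = k <;> simp_all
  have hT : #T ≤ 2 := by
    rcases T.eq_empty_or_nonempty with h | ⟨p, hp⟩
    · simp [h]
    · obtain ⟨hp12, hF⟩ := hflip p hp
      calc #T ≤ #F.offDiag := card_le_card fun q hq => by
              obtain ⟨hq12, hFq⟩ := hflip q hq
              simp [hFq, hq12]
        _ = 2 := by rw [offDiag_card, hF, card_pair hp12]
  have hnorm : ‖∑ j, ∑ k, f (j, k)‖ ≤ 2 :=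
    calc ‖∑ j, ∑ k, f (j, k)‖ = ‖∑ p ∈ T, f p‖ := by
          rw [sum_filter_ne_zero, Fintype.sum_prod_type]
      _ ≤ ∑ p ∈ T, ‖f p‖ := norm_sum_le _ _
      _ ≤ #T • (1 : ℝ) := sum_le_card_nsmul _ _ _ fun p _ =>
          entry_norm_bound_of_unitary (PauliOp_mem_unitaryGroup a) _ _
      _ ≤ 2 := by simpa using (Nat.cast_le (α := ℝ)).mpr hT
  rw [pExp_Wproj, abs_div, Nat.abs_cast]
  gcongr
  exact (Complex.abs_re_le_norm _).trans hnorm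

end WState

section Counting

theorem card_filter_card_le_or_card_compl_le_mul_rpow_le {α : Type*} [Fintype α]
    [DecidableEq α] {x : ℝ} (hx₀ : 0 < x) (hx₁ : x ≤ 1) (k : ℝ) :
    #{s : Finset α | (#s : ℝ) ≤ k ∨ (#sᶜ : ℝ) ≤ k} * x ^ k ≤ 2 * (1 + x) ^ Fintype.card α := by
  have hsum : ∑ s : Finset α, (x ^ #s + x ^ #sᶜ) = 2 * (1 + x) ^ Fintype.card α := by
    have h₁ := Fintype.sum_pow_mul_eq_add_pow α x 1
    have h₂ := Fintype.sum_pow_mul_eq_add_pow α 1 x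
    simp only [one_pow, mul_one, one_mul, ← card_compl] at h₁ h₂
    rw [sum_add_distrib, h₁, h₂, add_comm x]
    ring
  have hle : ∀ s : Finset α, (#s : ℝ) ≤ k ∨ (#sᶜ : ℝ) ≤ k → x ^ k ≤ x ^ #s + x ^ #sᶜ := by
    rintro s (h | h)
    · have := Real.rpow_le_rpow_of_exponent_ge hx₀ hx₁ h
      rw [Real.rpow_natCast] at this
      linarith [pow_pos hx₀ #sᶜ]
    · have := Real.rpow_le_rpow_of_exponent_ge hx₀ hx₁ h
      rw [Real.rpow_natCast] at this
      linarith [pow_pos hx₀ #s]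
  rw [← hsum, ← nsmul_eq_mul]
  calc _ ≤ ∑ s ∈ {s : Finset α | (#s : ℝ) ≤ k ∨ (#sᶜ : ℝ) ≤ k}, (x ^ #s + x ^ #sᶜ) :=
        card_nsmul_le_sum _ _ _ fun s hs => hle s (mem_filter.mp hs).2
    _ ≤ _ := sum_le_sum_of_subset_of_nonneg (filter_subset _ _) fun _ _ _ => by positivity

theorem two_mul_pow_lt_rpow {n : ℕ} (hn : 5 ≤ n) :
    2 * (1 + 1 / 7 : ℝ) ^ n < 2 ^ (3 * (n : ℝ) / 4) * (1 / 7) ^ ((n : ℝ) / 8) := by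
  have hrhs :
      (2 : ℝ) ^ (3 * (n : ℝ) / 4) * (1 / 7) ^ ((n : ℝ) / 8) = (64 / 7) ^ ((n : ℝ) / 8) := by
    rw [show 3 * (n : ℝ) / 4 = 6 * (n / 8) by ring, Real.rpow_mul (by norm_num),
      ← Real.mul_rpow (by norm_num) (by norm_num)]
    norm_num
  rw [hrhs]
  refine lt_of_pow_lt_pow_left₀ 8 (by positivity) ?_
  rw [← Real.rpow_natCast ((64 / 7 : ℝ) ^ ((n : ℝ) / 8)), ← Real.rpow_mul (by norm_num),
    show (n : ℝ) / 8 * (8 : ℕ) = n by push_cast; ring, Real.rpow_natCast]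
  have hc : (256 : ℝ) < (823543 / 262144) ^ n :=
    calc (256 : ℝ) < (823543 / 262144) ^ 5 := by norm_num
      _ ≤ _ := pow_le_pow_right₀ (by norm_num) hn
  calc (2 * (1 + 1 / 7 : ℝ) ^ n) ^ 8 = 256 * ((8 / 7) ^ 8) ^ n := by
        rw [mul_pow, ← pow_mul, ← pow_mul, mul_comm n]
        norm_num
    _ < (823543 / 262144) ^ n * ((8 / 7) ^ 8) ^ n := by gcongr
    _ = (64 / 7) ^ n := by rw [← mul_pow]; norm_num

end Counting

theorem card_filter_lt_abs_pExp_Wproj_lt {n : ℕ} (hn : 5 ≤ n) :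
    (#{a : Fin n → Fin 4 | 3 / 4 < |pExp (Wproj n) a|} : ℝ) < 2 ^ (3 * (n : ℝ) / 4) := by
  set Z : (Fin n → Fin 4) → Finset (Fin n) := fun a => {i | a i = 3}
  have hlarge : ∀ a, 3 / 4 < |pExp (Wproj n) a| →
      (∀ i, a i = 0 ∨ a i = 3) ∧ ((#(Z a) : ℝ) ≤ n / 8 ∨ (#(Z a)ᶜ : ℝ) ≤ n / 8) := by
    intro a ha
    have hn' : (5 : ℝ) ≤ n := by exact_mod_cast hn
    have hdiag : ∀ i, a i = 0 ∨ a i = 3 := by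
      by_contra! ⟨i, hi₀, hi₃⟩
      have hXY : a i = 1 ∨ a i = 2 := by
        revert hi₀ hi₃
        generalize a i = c
        decide +revert
      have h2n : 2 / (n : ℝ) ≤ 2 / 5 :=
        div_le_div_of_nonneg_left (by norm_num) (by norm_num) hn'
      linarith [abs_pExp_Wproj_le_of_eq_one_or_eq_two hXY]
    refine ⟨hdiag, ?_⟩
    rw [pExp_Wproj_of_forall_eq_zero_or_eq_three hdiag, abs_div, Nat.abs_cast,
      lt_div_iff₀ (by linarith)] at ha
    rw [card_compl, Fintype.card_fin,
      Nat.cast_sub ((Z a).card_le_univ.trans_eq (Fintype.card_fin n))]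
    rcases lt_abs.mp ha with h | h
    · left; linarith
    · right; linarith
  have hinj : Set.InjOn Z {a | 3 / 4 < |pExp (Wproj n) a|} := by
    intro a ha b hb hab
    funext i
    have hi : a i = 3 ↔ b i = 3 := by simpa [Z] using Finset.ext_iff.mp hab i
    rcases (hlarge a ha).1 i with h | h <;> rcases (hlarge b hb).1 i with h' | h' <;> simp_all
  have hcard : #{a : Fin n → Fin 4 | 3 / 4 < |pExp (Wproj n) a|}
      ≤ #{s : Finset (Fin n) | (#s : ℝ) ≤ n / 8 ∨ (#sᶜ : ℝ) ≤ n / 8} :=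
    card_le_card_of_injOn Z (fun a ha => by simpa using (hlarge a (by simpa using ha)).2)
      (by simpa using hinj)
  have hcount := card_filter_card_le_or_card_compl_le_mul_rpow_le (α := Fin n)
    (x := 1 / 7) (by norm_num) (by norm_num) (n / 8)
  rw [Fintype.card_fin] at hcount
  calc _ ≤ (#{s : Finset (Fin n) | (#s : ℝ) ≤ n / 8 ∨ (#sᶜ : ℝ) ≤ n / 8} : ℝ) := by
        exact_mod_cast hcard
    _ < _ := lt_of_mul_lt_mul_right (hcount.trans_lt (two_mul_pow_lt_rpow hn)) (by positivity)

/-- If `ρ'` is an `n`-qubit state (`n ≥ 5`) with at least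
`2^(3n/4)` Pauli strings of expectation `±1`, then `‖|W_n⟩⟨W_n| − ρ'‖₁ ≥ 1/4`. -/
theorem stmt_10 {n : ℕ} (hn : 5 ≤ n)
    (ρ' : Matrix (Fin n → Fin 2) (Fin n → Fin 2) ℂ) (hρ' : IsState ρ')
    (hcard : (2 : ℝ) ^ ((3 * (n : ℝ)) / 4)
      ≤ (({a : Fin n → Fin 4 | (pExp ρ' a) ^ 2 = 1}.ncard : ℝ))) :
    1 / 4 ≤ traceNorm (Wproj n - ρ') := by
  obtain ⟨a, ha, hWa⟩ : ∃ a, pExp ρ' a ^ 2 = 1 ∧ |pExp (Wproj n) a| ≤ 3 / 4 := by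
    by_contra! h
    have hsub : {a | pExp ρ' a ^ 2 = 1} ⊆ ↑({a | 3 / 4 < |pExp (Wproj n) a|} : Finset _) :=
      fun a ha => by simpa using h a ha
    have := Set.ncard_le_ncard hsub
    rw [Set.ncard_coe_finset] at this
    linarith [card_filter_lt_abs_pExp_Wproj_lt hn, (Nat.cast_le (α := ℝ)).mpr this]
  have hρa : |pExp ρ' a| = 1 := (abs_eq zero_le_one).mpr (sq_eq_one_iff.mp ha)
  calc 1 / 4 ≤ |pExp (Wproj n) a - pExp ρ' a| := by
        linarith [abs_sub_abs_le_abs_sub (pExp ρ' a) (pExp (Wproj n) a),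
          abs_sub_comm (pExp ρ' a) (pExp (Wproj n) a)]
    _ ≤ traceNorm (Wproj n - ρ') :=
        abs_pExp_sub_le_traceNorm (posSemidef_vecMulVec_self_star _).1 hρ'.posSemidef.1 a
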